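/- Let μ be a locally finite signed Borel measure on ℝ and let f : ℝ → ℝ be a function (of locally bounded variation) such that μ((a,b]) = f(b) − f(a) for all real a < b. Then for x₀ ∈ ℝ and L ∈ ℝ: f is differentiable at x₀ with f′(x₀) = L if and only if the strong derivative of μ at x₀ exists and equals L. -/

import Mathlib

open MeasureTheory Metric Filter
open scoped ENNReal Topology NNReal

noncomputable section

/-- The locally finite signed measure dμ = g dν on ℝ has strong derivative L at x₀:
for every bounded open interval (open ball) B = B(y,s), `μ(x₀ + rB)/m(rB) → L` as
`r → 0⁺`; here `x₀ + r·B(y,s) = B(x₀ + ry, rs)`. -/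
def HasStrongDerivR (ν : Measure ℝ) (g : ℝ → ℝ) (x₀ : ℝ) (L : ℝ) : Prop :=
  ∀ (y s : ℝ), 0 < s →
    Tendsto (fun r : ℝ =>
        (∫ ξ in ball (x₀ + r * y) (r * s), g ξ ∂ν) /
          (volume (ball (x₀ + r * y) (r * s))).toReal)
      (𝓝[>] 0) (𝓝 L)

open Set Asymptotics

/-!
For `B = B(y, s)` and `r > 0`, the set `x₀ + rB` is the open interval `(a, b)` with
`a = x₀ + r(y - s)`, `b = x₀ + r(y + s)`, and `μ(a, b) = f b - f a - μ{b}`. The atom `μ{p}` is the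
left jump `lim_{q → p⁻} (f p - f q)`, and near a point where `f` is differentiable these jumps are
`o(p - x₀)`. Hence `μ(x₀ + rB) / m(rB)` is a difference quotient of `f` at scale `r`, up to `o(1)`.
Conversely, `(a, a + 2r) = (a, a + r] ∪ (a + r, a + 2r)` writes the difference quotient
`(f (a + r) - f a) / r` as `2 · (ratio over a ball of radius r) - (ratio over one of radius r/2)`;
taking `a = x₀` and `a = x₀ - r` gives both one-sided derivatives.
-/

section SetIntegral

variable {ν : Measure ℝ} {g : ℝ → ℝ}

lemma MeasureTheory.LocallyIntegrable.integrableOn_of_subset_Icc (hg : LocallyIntegrable g ν)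
    {s : Set ℝ} {a b : ℝ} (hs : s ⊆ Icc a b) : IntegrableOn g s ν :=
  (hg.integrableOn_isCompact isCompact_Icc).mono_set hs

lemma setIntegral_Ioc_eq_Ioo_add_singleton (hg : LocallyIntegrable g ν) {a b : ℝ}
    (hab : a < b) :
    ∫ ξ in Ioc a b, g ξ ∂ν = ∫ ξ in Ioo a b, g ξ ∂ν + ∫ ξ in {b}, g ξ ∂ν := by
  rw [← Ioo_union_right hab]
  exact setIntegral_union (by simp) (measurableSet_singleton b)
    (hg.integrableOn_of_subset_Icc Ioo_subset_Icc_self)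
    (hg.integrableOn_of_subset_Icc (singleton_subset_iff.2 (right_mem_Icc.2 hab.le)))

lemma setIntegral_Ioo_eq_Ioc_add_Ioo (hg : LocallyIntegrable g ν) {a b c : ℝ} (hab : a ≤ b)
    (hbc : b < c) :
    ∫ ξ in Ioo a c, g ξ ∂ν = ∫ ξ in Ioc a b, g ξ ∂ν + ∫ ξ in Ioo b c, g ξ ∂ν := by
  rw [← Ioc_union_Ioo_eq_Ioo hab hbc]
  exact setIntegral_union (Ioc_disjoint_Ioi_same.mono_right Ioo_subset_Ioi_self)
    measurableSet_Ioo
    (hg.integrableOn_of_subset_Icc Ioc_subset_Icc_self)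
    (hg.integrableOn_of_subset_Icc Ioo_subset_Icc_self)

lemma tendsto_setIntegral_Ioc_nhdsLT (hg : LocallyIntegrable g ν) (p : ℝ) :
    Tendsto (fun q => ∫ ξ in Ioc q p, g ξ ∂ν) (𝓝[<] p) (𝓝 (∫ ξ in {p}, g ξ ∂ν)) := by
  have : (atTop : Filter (Iio p)).IsCountablyGenerated := by
    rw [← comap_coe_Iio_nhdsLT]; infer_instance
  have hInter : (⋂ q : Iio p, Ioc (q : ℝ) p) = {p} := by
    ext x
    simp only [mem_iInter, mem_Ioc, mem_singleton_iff, Subtype.forall, mem_Iio]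
    refine ⟨fun h => le_antisymm (h (p - 1) (by linarith)).2 ?_, ?_⟩
    · by_contra! hx
      exact (h x hx).1.false
    · rintro rfl q hq; exact ⟨hq, le_rfl⟩
  rw [← tendsto_comp_coe_Iio_atTop, ← hInter]
  exact tendsto_setIntegral_of_antitone (fun _ => measurableSet_Ioc)
    (fun q q' hqq' => Ioc_subset_Ioc_left hqq')
    ⟨⟨p - 1, by simp⟩, hg.integrableOn_of_subset_Icc Ioc_subset_Icc_self⟩

end SetIntegral

section Derivative

variable {f : ℝ → ℝ} {L x₀ : ℝ}

theorem HasDerivAt.isLittleO_left_jump {J : ℝ → ℝ} (hf : HasDerivAt f L x₀)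
    (hJ : ∀ p, Tendsto (fun q => f p - f q) (𝓝[<] p) (𝓝 (J p))) :
    J =o[𝓝 x₀] (· - x₀) := by
  refine IsLittleO.of_bound fun ε hε => ?_
  have hφ := eventually_eventually_nhds.2
    ((hasDerivAt_iff_isLittleO.1 hf).def (half_pos hε))
  filter_upwards [hφ] with p hnear
  have hp := hnear.self_of_nhds
  simp only [Real.norm_eq_abs, smul_eq_mul] at hp hnear ⊢
  have hbound : Tendsto (fun q => ε / 2 * |p - x₀| + ε / 2 * |q - x₀| + |L| * |p - q|)
      (𝓝[<] p) (𝓝 (ε * |p - x₀|)) := by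
    have : Continuous fun q => ε / 2 * |p - x₀| + ε / 2 * |q - x₀| + |L| * |p - q| := by
      fun_prop
    convert (this.tendsto p).mono_left nhdsWithin_le_nhds using 2
    simp only [sub_self, abs_zero, mul_zero, add_zero]; ring
  refine le_of_tendsto_of_tendsto (hJ p).abs hbound ?_
  filter_upwards [nhdsWithin_le_nhds hnear] with q hq
  calc |f p - f q|
      = |(f p - f x₀ - (p - x₀) * L) - (f q - f x₀ - (q - x₀) * L) + L * (p - q)| := by
        ring_nf
    _ ≤ ε / 2 * |p - x₀| + ε / 2 * |q - x₀| + |L| * |p - q| := by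
        grw [abs_add_le, abs_sub, abs_mul, hp, hq]

theorem HasDerivAt.tendsto_sub_div (hf : HasDerivAt f L x₀) (c d : ℝ) :
    Tendsto (fun r => (f (x₀ + r * c) - f (x₀ + r * d)) / r) (𝓝[≠] 0)
      (𝓝 (L * (c - d))) := by
  have hcomp (e : ℝ) : HasDerivAt (fun r => f (x₀ + r * e)) (L * e) 0 := by
    have hlin : HasDerivAt (fun r : ℝ => x₀ + r * e) e 0 := by
      simpa using ((hasDerivAt_id (0 : ℝ)).mul_const e).const_add x₀
    have hf' : HasDerivAt f L (x₀ + 0 * e) := by simpa using hf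
    exact hf'.comp 0 hlin
  simpa [mul_sub, div_eq_inv_mul] using ((hcomp c).sub (hcomp d)).tendsto_slope_zero

theorem hasDerivAt_of_tendsto_sub_div
    (hright : Tendsto (fun r => (f (x₀ + r) - f x₀) / r) (𝓝[>] 0) (𝓝 L))
    (hleft : Tendsto (fun r => (f x₀ - f (x₀ - r)) / r) (𝓝[>] 0) (𝓝 L)) :
    HasDerivAt f L x₀ := by
  rw [hasDerivAt_iff_tendsto_slope_zero, ← nhdsLT_sup_nhdsGT, tendsto_sup]
  constructor
  · have hneg : Tendsto Neg.neg (𝓝[<] (0 : ℝ)) (𝓝[>] 0) := by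
      simpa using tendsto_neg_nhdsLT (a := (0 : ℝ))
    refine (hleft.comp hneg).congr fun r => ?_
    simp only [Function.comp, sub_neg_eq_add, smul_eq_mul]
    rw [div_neg, ← neg_div, neg_sub, div_eq_inv_mul]
  · simpa [div_eq_inv_mul] using hright

end Derivative

section StrongDerivative

variable {ν : Measure ℝ} {g f : ℝ → ℝ} {x₀ L : ℝ}

lemma setIntegral_ball_div_volume_eq {r s : ℝ} (hr : 0 < r) (hs : 0 < s) (y : ℝ) :
    (∫ ξ in ball (x₀ + r * y) (r * s), g ξ ∂ν) /
        (volume (ball (x₀ + r * y) (r * s))).toReal =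
      (∫ ξ in Ioo (x₀ + r * (y - s)) (x₀ + r * (y + s)), g ξ ∂ν) / (2 * (r * s)) := by
  rw [Real.volume_ball, ENNReal.toReal_ofReal (by positivity), Real.ball_eq_Ioo]
  congr 3
  congr 1 <;> ring

theorem hasStrongDerivR_of_hasDerivAt (hg : LocallyIntegrable g ν)
    (hμf : ∀ a b : ℝ, a < b → ∫ ξ in Ioc a b, g ξ ∂ν = f b - f a) (hf : HasDerivAt f L x₀) :
    HasStrongDerivR ν g x₀ L := by
  intro y s hs
  set J : ℝ → ℝ := fun p => ∫ ξ in {p}, g ξ ∂ν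
  have hJ : J =o[𝓝 x₀] (· - x₀) := hf.isLittleO_left_jump fun p =>
    (tendsto_setIntegral_Ioc_nhdsLT hg p).congr' <|
      eventually_nhdsWithin_of_forall fun q hq => hμf q p hq
  have hjump : Tendsto (fun r => J (x₀ + r * (y + s)) / r) (𝓝[>] 0) (𝓝 0) := by
    have hlin : Tendsto (fun r : ℝ => x₀ + r * (y + s)) (𝓝 0) (𝓝 x₀) := by
      simpa using ((continuous_mul_const (y + s)).const_add x₀).tendsto 0
    refine (IsLittleO.tendsto_div_nhds_zero ?_).mono_left nhdsWithin_le_nhds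
    refine (hJ.comp_tendsto hlin).trans_isBigO (IsBigO.of_bound |y + s| ?_)
    filter_upwards with r
    simp [mul_comm]
  have hslope := (hf.tendsto_sub_div (y + s) (y - s)).mono_left (nhdsGT_le_nhdsNE 0)
  have hlim := (hslope.sub hjump).div_const (2 * s)
  rw [show (L * (y + s - (y - s)) - 0) / (2 * s) = L by field_simp; ring] at hlim
  refine hlim.congr' ?_
  filter_upwards [self_mem_nhdsWithin] with r (hr : 0 < r)
  have hab : x₀ + r * (y - s) < x₀ + r * (y + s) := by nlinarith
  have hIoc := setIntegral_Ioc_eq_Ioo_add_singleton hg hab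
  rw [hμf _ _ hab] at hIoc
  rw [setIntegral_ball_div_volume_eq hr hs, eq_sub_of_add_eq hIoc.symm]
  field_simp
  rfl

theorem tendsto_sub_div_of_hasStrongDerivR (hg : LocallyIntegrable g ν)
    (hμf : ∀ a b : ℝ, a < b → ∫ ξ in Ioc a b, g ξ ∂ν = f b - f a)
    (h : HasStrongDerivR ν g x₀ L) (t : ℝ) :
    Tendsto (fun r => (f (x₀ + r * t) - f (x₀ + r * (t - 1))) / r) (𝓝[>] 0) (𝓝 L) := by
  have hlim := ((h t 1 one_pos).const_mul 2).sub (h (t + 1 / 2) (1 / 2) (by norm_num))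
  rw [show 2 * L - L = L by ring] at hlim
  refine hlim.congr' ?_
  filter_upwards [self_mem_nhdsWithin] with r (hr : 0 < r)
  rw [setIntegral_ball_div_volume_eq hr one_pos,
    setIntegral_ball_div_volume_eq hr (by norm_num),
    show t + 1 / 2 - 1 / 2 = t by ring, show t + 1 / 2 + 1 / 2 = t + 1 by ring,
    setIntegral_Ioo_eq_Ioc_add_Ioo hg (b := x₀ + r * t) (by nlinarith) (by nlinarith),
    hμf _ _ (by nlinarith)]
  field_simp
  ring

end StrongDerivative

/-- In one dimension, if `μ((a,b]) = f(b) - f(a)`, then f is differentiable at x₀ with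
`f'(x₀) = L` iff μ has strong derivative L at x₀. -/
theorem stmt13 (ν : Measure ℝ) [IsLocallyFiniteMeasure ν]
    (g : ℝ → ℝ) (hg : Measurable g) (hg1 : ∀ ξ, |g ξ| = 1)
    (f : ℝ → ℝ)
    (hμf : ∀ a b : ℝ, a < b → (∫ ξ in Set.Ioc a b, g ξ ∂ν) = f b - f a)
    (x₀ L : ℝ) :
    HasDerivAt f L x₀ ↔ HasStrongDerivR ν g x₀ L := by
  have hloc : LocallyIntegrable g ν :=
    (locallyIntegrable_const (1 : ℝ)).mono hg.aestronglyMeasurable (ae_of_all _ fun ξ => by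
      simp [hg1])
  refine ⟨hasStrongDerivR_of_hasDerivAt hloc hμf, fun h => hasDerivAt_of_tendsto_sub_div ?_ ?_⟩
  · simpa using tendsto_sub_div_of_hasStrongDerivR hloc hμf h 1
  · simpa [← sub_eq_add_neg] using tendsto_sub_div_of_hasStrongDerivR hloc hμf h 0

end
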